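/- Let G_ℤ = H ⋊ ℤ as above with P satisfying (S1)–(S4). Then for any element h̄t^n ∈ G_ℤ with |n| > 1, the word norm of h̄t^n with respect to the conjugacy closure of S = H₀ ∪ {t^{±1}} equals |n|. -/

import Mathlib

variable (P : Type) [Group P]

/-- Finitely supported functions `ℤ → P`, as a subgroup of the full product. -/
def Hgrp : Subgroup (ℤ → P) where
  carrier := {f | (Function.mulSupport f).Finite}
  one_mem' := by simp [Function.mulSupport_one]
  mul_mem' := by
    intro a b ha hb
    exact (ha.union hb).subset (Function.mulSupport_mul a b)
  inv_mem' := by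
    intro a ha
    simpa [Function.mulSupport_inv] using ha

/-- The one-step shift automorphism of `Hgrp P`. -/
def shiftAut : MulAut (Hgrp P) where
  toFun f := ⟨fun i => f.1 (i + 1), by
    have : Function.mulSupport (fun i : ℤ => f.1 (i + 1)) ⊆
        (fun i : ℤ => i - 1) '' Function.mulSupport f.1 := by
      intro i hi
      exact ⟨i + 1, hi, by ring⟩
    exact (f.2.image _).subset this⟩
  invFun f := ⟨fun i => f.1 (i - 1), by
    have : Function.mulSupport (fun i : ℤ => f.1 (i - 1)) ⊆
        (fun i : ℤ => i + 1) '' Function.mulSupport f.1 := by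
      intro i hi
      exact ⟨i - 1, hi, by ring⟩
    exact (f.2.image _).subset this⟩
  left_inv f := by ext i; simp
  right_inv f := by ext i; simp
  map_mul' f g := rfl

/-- The wreath-type group `G_ℤ = H ⋊ ℤ`. -/
abbrev GZ : Type :=
  Hgrp P ⋊[zpowersHom (MulAut (Hgrp P)) (shiftAut P)] Multiplicative ℤ

/-- The element `t = (1,1)` of `G_ℤ`. -/
def tElt : GZ P := SemidirectProduct.inr (Multiplicative.ofAdd 1)

/-- The element of `Hgrp P` supported at `i` with value `h`. -/
def singleAt (i : ℤ) (h : P) : Hgrp P :=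
  ⟨fun j => if j = i then h else 1, by
    apply Set.Finite.subset (Set.finite_singleton i)
    intro j hj
    by_contra hne
    simp only [Set.mem_singleton_iff] at hne
    exact hj (if_neg hne)⟩

open Pointwise SemidirectProduct
open scoped commutatorElement

/-!
Projecting `G_ℤ` onto `ℤ` sends every conjugate of an element of `S` to `0` or `±1`, so
`‖h̄ tⁿ‖ ≥ |n|`. Conversely `v t v⁻¹ = δv · t` for `v ∈ H`, where `δv = v · α(v)⁻¹`, so `h̄ t²` is a
product of two conjugates of `t` as soon as `h̄` is a product of two coboundaries `δv · δw`;
then `h̄ tⁿ = (v t v⁻¹)(w' t w'⁻¹) tⁿ⁻²` for `n ≥ 2`, with `α(w') = w`, and `n ≤ -2` follows by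
inversion.
By (S1) (with `a₁ = 1`) every element of `P` is a commutator, and then every `h̄` is a product of
two coboundaries: for `L` left of the support of `h̄`, `h̄ = ([x, y] at L) · δw`, where `[x, y]` is
the ordered product of the values of `h̄`, and `[x, y]` at `L` is `δv · δu` for `u, v` supported
on `{L - 1, L}`; as `u` and `w` have separated supports, `δu · δw = δ(u w)`.
-/

section Coboundary

variable {P : Type} [Group P]

lemma singleAt_apply (i : ℤ) (a : P) (j : ℤ) :
    (singleAt P i a : ℤ → P) j = if j = i then a else 1 := rfl

lemma singleAt_inv (i : ℤ) (a : P) : (singleAt P i a)⁻¹ = singleAt P i a⁻¹ := by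
  ext j
  simp only [Subgroup.coe_inv, Pi.inv_apply, singleAt_apply]
  split_ifs <;> simp

def coboundary (v : Hgrp P) : Hgrp P := v * (shiftAut P v)⁻¹

lemma coboundary_apply (v : Hgrp P) (j : ℤ) :
    (coboundary v : ℤ → P) j = (v : ℤ → P) j * ((v : ℤ → P) (j + 1))⁻¹ := rfl

lemma shiftAut_coboundary (v : Hgrp P) :
    shiftAut P (coboundary v) = coboundary (shiftAut P v) := by
  rw [coboundary, map_mul, map_inv, coboundary]

lemma coboundary_mul_of_separated {u w : Hgrp P} {L : ℤ}
    (hu : ∀ j, L < j → (u : ℤ → P) j = 1) (hw : ∀ j ≤ L, (w : ℤ → P) j = 1) :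
    coboundary (u * w) = coboundary u * coboundary w := by
  ext j
  simp only [Subgroup.coe_mul, Pi.mul_apply, coboundary_apply]
  by_cases hj : L < j + 1
  · rw [hu _ hj]
    group
  · rw [hw j (by omega), hw (j + 1) (by omega)]
    group

lemma singleAt_commutatorElement (L : ℤ) (x y : P) :
    singleAt P L ⁅x, y⁆ = coboundary (singleAt P L x * singleAt P (L - 1) y) *
      coboundary (singleAt P L (y * x⁻¹ * y⁻¹) * singleAt P (L - 1) y⁻¹) := by
  ext j
  simp only [Subgroup.coe_mul, Pi.mul_apply, coboundary_apply, singleAt_apply,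
    commutatorElement_def]
  split_ifs <;> first | omega | group

def suffixProd (f : ℤ → P) (N j : ℤ) : P :=
  ((List.range (N - j).toNat).map fun k : ℕ => f (j + k)).prod

lemma suffixProd_of_le {f : ℤ → P} {N j : ℤ} (h : N ≤ j) : suffixProd f N j = 1 := by
  rw [suffixProd, show (N - j).toNat = 0 by omega, List.range_zero, List.map_nil, List.prod_nil]

lemma suffixProd_of_lt {f : ℤ → P} {N j : ℤ} (h : j < N) :
    suffixProd f N j = f j * suffixProd f N (j + 1) := by
  rw [suffixProd, show (N - j).toNat = (N - (j + 1)).toNat + 1 by omega, List.range_succ_eq_map,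
    List.map_cons, List.prod_cons, List.map_map, suffixProd]
  simp [Function.comp_def, add_assoc, add_comm (1 : ℤ)]

lemma exists_eq_singleAt_mul_coboundary (f : Hgrp P) {L N : ℤ}
    (hf : ∀ j, (f : ℤ → P) j ≠ 1 → L < j ∧ j < N) :
    ∃ w : Hgrp P, (∀ j ≤ L, (w : ℤ → P) j = 1) ∧
      f = singleAt P L (suffixProd f N (L + 1)) * coboundary w := by
  have hf' : ∀ j, j ≤ L ∨ N ≤ j → (f : ℤ → P) j = 1 := fun j hj => by
    by_contra hne
    have := hf j hne
    omega
  let w : ℤ → P := fun j => if L < j then suffixProd f N j else 1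
  have hw : w ∈ Hgrp P := by
    refine (Set.finite_Ioo L N).subset fun j hj => ?_
    by_contra hLN
    refine hj ?_
    by_cases hLj : L < j
    · simp only [w, if_pos hLj]
      exact suffixProd_of_le (by simp only [Set.mem_Ioo] at hLN; omega)
    · simp only [w, if_neg hLj]
  refine ⟨⟨w, hw⟩, fun j hj => show w j = 1 from if_neg (by omega), ?_⟩
  ext j
  simp only [Subgroup.coe_mul, Pi.mul_apply, coboundary_apply, singleAt_apply, w]
  rcases lt_trichotomy j L with hj | rfl | hj
  · simp [hf' j (by omega), hj.ne, not_lt.2 hj.le, show ¬ L < j + 1 by omega]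
  · simp [hf' j (Or.inl le_rfl)]
  · rw [if_neg hj.ne', if_pos hj, if_pos (by omega), one_mul]
    rcases lt_or_ge j N with hjN | hjN
    · rw [suffixProd_of_lt hjN, mul_inv_cancel_right]
    · rw [hf' j (Or.inr hjN), suffixProd_of_le hjN, suffixProd_of_le (by omega), inv_one, mul_one]

theorem exists_eq_coboundary_mul_coboundary (hP : commutatorSet P = Set.univ) (h : Hgrp P) :
    ∃ v w : Hgrp P, h = coboundary v * coboundary w := by
  obtain ⟨L, hL⟩ := h.2.bddBelow
  obtain ⟨N, hN⟩ := h.2.bddAbove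
  obtain ⟨w, hw, hhw⟩ := exists_eq_singleAt_mul_coboundary h (L := L - 1) (N := N + 1)
    fun j hj => ⟨by linarith [hL hj], by linarith [hN hj]⟩
  obtain ⟨x, y, hxy⟩ : suffixProd h (N + 1) (L - 1 + 1) ∈ commutatorSet P := by
    rw [hP]; trivial
  refine ⟨singleAt P (L - 1) x * singleAt P (L - 1 - 1) y,
    singleAt P (L - 1) (y * x⁻¹ * y⁻¹) * singleAt P (L - 1 - 1) y⁻¹ * w, ?_⟩
  rw [coboundary_mul_of_separated (L := L - 1) _ hw, ← mul_assoc, ← singleAt_commutatorElement,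
    hxy, ← hhw]
  intro j hj
  simp [singleAt_apply, hj.ne', show j ≠ L - 1 - 1 by omega]

lemma tElt_mul_inl (a : Hgrp P) : tElt P * inl a = inl (shiftAut P a) * tElt P := by
  ext <;> simp [tElt]

lemma inl_mul_tElt_mul_inl_inv (v : Hgrp P) :
    inl v * tElt P * (inl v)⁻¹ = inl (coboundary v) * tElt P := by
  rw [← map_inv, mul_assoc, tElt_mul_inl, ← mul_assoc, ← map_mul, map_inv, coboundary]

lemma tElt_pow (m : ℕ) : tElt P ^ m = inr (Multiplicative.ofAdd (m : ℤ)) := by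
  rw [tElt, ← map_pow, ← ofAdd_nsmul, nsmul_one]

end Coboundary

section ConjugacyClosure

variable {G : Type*} [Group G]

lemma inv_conjClosure_subset {S : Set G} (hS : S⁻¹ ⊆ S) :
    {x | ∃ s ∈ S, ∃ g : G, g * s * g⁻¹ = x}⁻¹ ⊆ {x | ∃ s ∈ S, ∃ g : G, g * s * g⁻¹ = x} := by
  rintro x ⟨s, hs, g, hx⟩
  exact ⟨s⁻¹, hS (by simpa using hs), g, by rw [← inv_inv x, ← hx]; group⟩

lemma natAbs_toAdd_le_of_mem_pow (φ : G →* Multiplicative ℤ) {S : Set G}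
    (hS : ∀ s ∈ S, (φ s).toAdd.natAbs ≤ 1) {k : ℕ} {g : G} (hg : g ∈ S ^ k) :
    (φ g).toAdd.natAbs ≤ k := by
  induction k generalizing g with
  | zero => simp_all [Set.mem_one]
  | succ k ih =>
    obtain ⟨a, ha, b, hb, rfl⟩ := Set.mem_mul.1 (pow_succ S k ▸ hg)
    rw [map_mul, toAdd_mul]
    have := Int.natAbs_add_le (φ a).toAdd (φ b).toAdd
    have := ih ha
    have := hS b hb
    omega

lemma natAbs_toAdd_le_of_mem_conjClosure_pow (φ : G →* Multiplicative ℤ) {S : Set G}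
    (hS : ∀ s ∈ S, (φ s).toAdd.natAbs ≤ 1) {k : ℕ} {g : G}
    (hg : g ∈ {x | ∃ s ∈ S, ∃ g : G, g * s * g⁻¹ = x} ^ k) :
    (φ g).toAdd.natAbs ≤ k := by
  refine natAbs_toAdd_le_of_mem_pow φ ?_ hg
  rintro _ ⟨s, hs, g, rfl⟩
  simpa only [map_mul, map_inv, mul_inv_cancel_comm] using hS s hs

end ConjugacyClosure

section UpperBound

variable {P : Type} [Group P]

lemma conj_tElt_mul_conj_tElt (v w : Hgrp P) :
    inl v * tElt P * (inl v)⁻¹ * (inl w * tElt P * (inl w)⁻¹) =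
      inl (coboundary v * coboundary (shiftAut P w)) * tElt P ^ 2 := by
  rw [inl_mul_tElt_mul_inl_inv, inl_mul_tElt_mul_inl_inv, mul_assoc, ← mul_assoc (tElt P),
    tElt_mul_inl, shiftAut_coboundary, map_mul, sq]
  group

lemma inl_mul_inr_mem_pow (hP : commutatorSet P = Set.univ) {C : Set (GZ P)}
    (hC : ∀ g, g * tElt P * g⁻¹ ∈ C) (h : Hgrp P) (m : ℕ) :
    inl h * inr (Multiplicative.ofAdd ((m : ℤ) + 2)) ∈ C ^ (m + 2) := by
  obtain ⟨v, w, rfl⟩ := exists_eq_coboundary_mul_coboundary hP h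
  set w' := (shiftAut P).symm w
  have hfactor : inl (coboundary v * coboundary w) * inr (Multiplicative.ofAdd ((m : ℤ) + 2)) =
      inl v * tElt P * (inl v)⁻¹ * (inl w' * tElt P * (inl w')⁻¹) * tElt P ^ m := by
    rw [conj_tElt_mul_conj_tElt, MulEquiv.apply_symm_apply, mul_assoc, ← pow_add, tElt_pow,
      add_comm 2 m]
    push_cast
    rfl
  rw [hfactor, add_comm m, pow_add, sq]
  exact Set.mul_mem_mul (Set.mul_mem_mul (hC _) (hC _)) (Set.pow_mem_pow (by simpa using hC 1))

lemma inl_mul_inr_mem_pow_natAbs (hP : commutatorSet P = Set.univ) {C : Set (GZ P)}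
    (hC : ∀ g, g * tElt P * g⁻¹ ∈ C) (hCinv : C⁻¹ ⊆ C) (h : Hgrp P) {n : ℤ} (hn : 1 < |n|) :
    inl h * inr (Multiplicative.ofAdd n) ∈ C ^ n.natAbs := by
  rw [Int.abs_eq_natAbs] at hn
  rcases le_or_gt 0 n with hn0 | hn0
  · obtain ⟨m, rfl⟩ : ∃ m : ℕ, n = m + 2 := ⟨n.natAbs - 2, by omega⟩
    simpa [Int.natAbs_add_of_nonneg] using inl_mul_inr_mem_pow hP hC h m
  · obtain ⟨m, rfl⟩ : ∃ m : ℕ, n = -(m + 2) := ⟨n.natAbs - 2, by omega⟩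
    have hinv : (inl h * inr (Multiplicative.ofAdd (-((m : ℤ) + 2))) : GZ P)⁻¹ =
        inl (zpowersHom (MulAut (Hgrp P)) (shiftAut P) (Multiplicative.ofAdd ((m : ℤ) + 2)) h⁻¹) *
          inr (Multiplicative.ofAdd ((m : ℤ) + 2)) := by
      ext <;> simp
    have := inl_mul_inr_mem_pow hP hC
      (zpowersHom (MulAut (Hgrp P)) (shiftAut P) (Multiplicative.ofAdd ((m : ℤ) + 2)) h⁻¹) m
    rw [← hinv, ← Set.inv_mem_inv, ← inv_pow] at this
    rw [show (-((m : ℤ) + 2)).natAbs = m + 2 by omega]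
    simpa using Set.pow_subset_pow_left hCinv this

end UpperBound

theorem stmt_16
    (hS1 : ∀ a₁ a₂ : P, ∃ x y : P, a₂ = x⁻¹ * a₁⁻¹ * y * x * y⁻¹)
    (S : Set (GZ P))
    (hS : S = {x : GZ P | ∃ h : P, x = SemidirectProduct.inl (singleAt P 0 h)} ∪
      {tElt P, (tElt P)⁻¹})
    (Sbar : Set (GZ P))
    (hSbar : Sbar = {x : GZ P | ∃ s ∈ S, ∃ g : GZ P, g * s * g⁻¹ = x})
    (h : Hgrp P) (n : ℤ) (hn : 1 < |n|) :
    IsLeast {k : ℕ |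
      SemidirectProduct.inl h * SemidirectProduct.inr (Multiplicative.ofAdd n)
        ∈ Sbar ^ k} n.natAbs := by
  have hP : commutatorSet P = Set.univ := Set.eq_univ_of_forall fun b => by
    obtain ⟨x, y, hb⟩ := hS1 1 b
    exact ⟨x⁻¹, y, by rw [hb, commutatorElement_def]; group⟩
  have hSinv : S⁻¹ ⊆ S := by
    subst hS
    rintro x (⟨a, hx⟩ | hx | hx)
    · exact Or.inl ⟨a⁻¹, by rw [← singleAt_inv, map_inv, ← hx, inv_inv]⟩
    · exact Or.inr (Or.inr (inv_eq_iff_eq_inv.1 hx))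
    · exact Or.inr (Or.inl (by simpa using hx))
  have hSright : ∀ s ∈ S, (rightHom s).toAdd.natAbs ≤ 1 := by
    subst hS
    rintro s (⟨a, rfl⟩ | rfl | rfl) <;> simp [tElt]
  subst hSbar
  refine ⟨inl_mul_inr_mem_pow_natAbs hP (fun g => ?_) (inv_conjClosure_subset hSinv) h hn,
    fun k hk => ?_⟩
  · exact ⟨tElt P, by simp [hS], g, rfl⟩
  · simpa using natAbs_toAdd_le_of_mem_conjClosure_pow rightHom hSright hk
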